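/- Let K be a field, A the free K-module on PRT', and B the free K-module on PRT' × PRT'. Let Δ : A → B be the K-linear map with Δ(T) = Σ_{I ⊆ L(T)} (T|I, T|I^c) for every T ∈ PRT'. Extend, for each m ≥ 2, the m-ary operation gr (where gr : lists of elements of PRT' → PRT' deletes all entries equal to 1 and then returns 1 if no entries remain, the unique entry if exactly one remains, and the grafting node of the remaining entries otherwise) K-multilinearly to A, and extend it componentwise and K-multilinearly to B. Then: (i) Δ(1) = (1,1) and Δ(x) = (x,1) + (1,x); (ii) for every m ≥ 2 and all f_1,…,f_m ∈ A, Δ(gr(f_1,…,f_m)) = gr(Δ(f_1),…,Δ(f_m)); and (iii) for every f ∈ A and all V, W ∈ PRT', c_{V,W}(Δ(f)) = Σ_{T ∈ PRT'} c_T(f)·#N_{V,W}(T), where c_T and c_{V,W} denote the coordinate functionals of the free modules A and B. -/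

import Mathlib

inductive PTree : Type where
  | node : List PTree → PTree

namespace PTree

/-- the single-vertex tree -/
def x : PTree := node []

/-- the number of leaves of a tree -/
def deg : PTree → ℕ
  | node l => max 1 (l.attach.map fun t => deg t.1).sum
decreasing_by
  have := List.sizeOf_lt_of_mem t.2
  simp; omega

/-- a tree is reduced if no vertex has arity 1 -/
inductive Reduced : PTree → Prop where
  | node (l : List PTree) (hlen : l.length ≠ 1) (h : ∀ t ∈ l, Reduced t) :
      Reduced (node l)

/-- the reduction of a tree -/
def red : PTree → PTree
  | node [t] => red t
  | node l => node (l.attach.map fun t => red t.1)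
decreasing_by
  · simp; omega
  · have := List.sizeOf_lt_of_mem t.2
    simp; omega

mutual
/-- the spanning subtree `T_I` determined by a set `I ⊆ range (deg T)` of leaf positions
(counted from the left, starting at `0`) -/
def sub : PTree → Finset ℕ → PTree
  | node l, I => node (subList l I)
/-- auxiliary: the list of spanning subtrees of the children, children without
selected leaves being dropped -/
def subList : List PTree → Finset ℕ → List PTree
  | [], _ => []
  | t :: ts, I =>
      (if (I.filter (· < t.deg)).Nonempty then [sub t (I.filter (· < t.deg))] else [])
        ++ subList ts ((I.filter fun j => t.deg ≤ j).image fun j => j - t.deg)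
end

/-- the contraction `T|I`: the reduction of the spanning subtree, `1` (i.e. `none`) if `I = ∅` -/
def contract (T : PTree) (I : Finset ℕ) : Option PTree :=
  if I = ∅ then none else some (red (sub T I))

end PTree

/-- `PRT'`: finite planar rooted trees together with the empty tree `1 = none` -/
abbrev OT := Option PTree

/-- `deg` on `PRT'` -/
def degO (o : OT) : ℕ := o.elim 0 PTree.deg

/-- membership in `PRT'` = reduced trees together with the empty tree `1` -/
def ROT (o : OT) : Prop := ∀ t, o = some t → t.Reduced

/-- contraction on `PRT'` -/
def contractO : OT → Finset ℕ → OT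
  | none, _ => none
  | some t, I => PTree.contract t I

open Classical in
/-- `N_{S,T}(V)` as a finite set of subsets of the set of leaf positions of `V` -/
noncomputable def NFinset (S T V : OT) : Finset (Finset ℕ) :=
  (Finset.range (degO V)).powerset.filter fun I =>
    contractO V I = S ∧ contractO V (Finset.range (degO V) \ I) = T

/-- `#N_{S,T}(V)` -/
noncomputable def Ncount (S T V : OT) : ℕ := (NFinset S T V).card

/-- the free `K`-module on `PRT'` (realized inside the free module on all of `Option PTree`;
the elements of the free module on `PRT'` are those whose support satisfies `ROT`) -/
abbrev AMod (K : Type) [Field K] := OT →₀ K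

/-- `f` belongs to the free `K`-module on `PRT'` -/
def suppRed (K : Type) [Field K] (f : AMod K) : Prop := ∀ t ∈ f.support, ROT t

/-- the planar shuffle product `S ⧢ T = Σ_{V ∈ PRT'} #N_{S,T}(V)·V` of two monomials -/
noncomputable def shuffleM (K : Type) [Field K] (S T : OT) : AMod K :=
  ∑ᶠ (V : OT) (_ : ROT V), Finsupp.single V ((Ncount S T V : K))

/-- the `K`-bilinear extension of the planar shuffle product -/
noncomputable def shuffleF (K : Type) [Field K] (f g : AMod K) : AMod K :=
  f.sum fun S a => g.sum fun T b => (a * b) • shuffleM K S T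

/-- tensor-like product of a list of module elements, as a finitely supported
function on lists of basis elements -/
noncomputable def listProd (K : Type) [Field K] {σ : Type} : List (σ →₀ K) → (List σ →₀ K)
  | [] => Finsupp.single [] 1
  | f :: fs => f.sum fun t a => (listProd K fs).sum fun ts b => Finsupp.single (t :: ts) (a * b)

/-- the `K`-multilinear extension of an operation on basis elements -/
noncomputable def mulExt (K : Type) [Field K] {σ τ : Type} (op : List σ → τ)
    (l : List (σ →₀ K)) : τ →₀ K :=
  (listProd K l).sum fun ts c => Finsupp.single (op ts) c

/-- `gr` : delete all entries equal to `1`, then return `1` if no entry remains,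
the unique entry if exactly one remains, and the grafting `node` otherwise -/
def grO (ts : List OT) : OT :=
  match ts.reduceOption with
  | [] => none
  | [t] => some t
  | l => some (PTree.node l)

/-- the `K`-multilinear extension of `gr` -/
noncomputable def grF (K : Type) [Field K] (l : List (AMod K)) : AMod K := mulExt K grO l

/-- the `K`-multilinear extension of the grafting `node` (junk value `0` on lists
containing the empty tree `1`, which never occurs in its uses here) -/
noncomputable def nodeF (K : Type) [Field K] (l : List (AMod K)) : AMod K :=
  (listProd K l).sum fun ts c =>
    match (ts.mapM (id : Option PTree → Option PTree) : Option (List PTree)) with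
    | some l' => Finsupp.single (some (PTree.node l')) c
    | none => 0

/-- the free `K`-module on `PRT' × PRT'` (realized inside the free module on all pairs) -/
abbrev BMod (K : Type) [Field K] := (OT × OT) →₀ K

/-- the co-addition on a monomial: `Δ(T) = Σ_{I ⊆ L(T)} (T|I, T|I^c)` -/
noncomputable def DeltaM (K : Type) [Field K] (T : OT) : BMod K :=
  ∑ I ∈ (Finset.range (degO T)).powerset,
    Finsupp.single (contractO T I, contractO T (Finset.range (degO T) \ I)) 1

/-- the co-addition, extended `K`-linearly -/
noncomputable def Delta (K : Type) [Field K] (f : AMod K) : BMod K :=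
  f.sum fun T a => a • DeltaM K T

/-- componentwise `gr` on pairs of basis elements -/
def grPair (ps : List (OT × OT)) : OT × OT :=
  (grO (ps.map Prod.fst), grO (ps.map Prod.snd))

/-- the `K`-multilinear componentwise extension of `gr` to `B` -/
noncomputable def grB (K : Type) [Field K] (l : List (BMod K)) : BMod K := mulExt K grPair l

/-!
`Δ` is the linear extension of `T ↦ Σ_I (T|I, T|Iᶜ)`. Numbering the leaves of
`gr(T₁, …, Tₘ)` consecutively, a leaf set `I` is the same as a tuple `(I₁, …, Iₘ)` of leaf sets
of the `Tₖ`, and `gr(T₁, …, Tₘ)|I = gr(T₁|I₁, …, Tₘ|Iₘ)`: reduction absorbs a root left with one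
child, and `gr` drops the empty `Tₖ|Iₖ`. Hence (ii) holds on basis elements, and it extends to
all of `A` because `gr`, its componentwise version on `B` and `Δ` are all multilinear
extensions of their values on basis elements. (i) and (iii) are direct computations.
-/

section Multilinear

variable {K : Type} [Field K] {σ τ : Type}

open Finsupp

/-- The bilinear map `(f, F) ↦ Σ f(t) F(ts) · (t :: ts)` by which `listProd` is built. -/
noncomputable def consProd : (σ →₀ K) →ₗ[K] (List σ →₀ K) →ₗ[K] (List σ →₀ K) :=
  lsum K fun t => LinearMap.id.smulRight (lmapDomain K K (List.cons t))

lemma listProd_cons (f : σ →₀ K) (fs : List (σ →₀ K)) :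
    listProd K (f :: fs) = consProd f (listProd K fs) := by
  simp only [listProd, consProd, lsum_apply, LinearMap.finsupp_sum_apply,
    LinearMap.smulRight_apply, LinearMap.id_apply, LinearMap.smul_apply, lmapDomain_apply,
    mapDomain, smul_sum, smul_single, smul_eq_mul]

lemma consProd_single_single (t : σ) (ts : List σ) (a b : K) :
    consProd (single t a) (single ts b) = single (t :: ts) (a * b) := by
  simp [consProd, smul_single]

lemma mulExt_eq_mapDomain {σ' : Type} (op : List σ → σ') (l : List (σ →₀ K)) :
    mulExt K op l = mapDomain op (listProd K l) := rfl

lemma listProd_map_linearCombination (g : σ → τ →₀ K) (fs : List (σ →₀ K)) :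
    listProd K (fs.map (linearCombination K g))
      = linearCombination K (fun ts => listProd K (ts.map g)) (listProd K fs) := by
  induction fs with
  | nil => simp [listProd]
  | cons f fs ih =>
    rw [List.map_cons, listProd_cons, listProd_cons, ih]
    generalize listProd K fs = F
    induction f using induction_linear with
    | zero => simp
    | add f₁ f₂ h₁ h₂ => simp only [map_add, LinearMap.add_apply, h₁, h₂]
    | single t a =>
      induction F using induction_linear with
      | zero => simp
      | add F₁ F₂ h₁ h₂ => simp only [map_add, h₁, h₂]
      | single ts b =>
        simp only [consProd_single_single, linearCombination_single, map_smul,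
          LinearMap.smul_apply, smul_smul, List.map_cons, listProd_cons]
        rw [mul_comm]

lemma mulExt_map_linearCombination {σ' τ' : Type} (op : List σ → σ') (op' : List τ → τ')
    (g : σ → τ →₀ K) (g' : σ' → τ' →₀ K) (h : ∀ ts, mulExt K op' (ts.map g) = g' (op ts))
    (fs : List (σ →₀ K)) :
    mulExt K op' (fs.map (linearCombination K g)) = linearCombination K g' (mulExt K op fs) := by
  rw [mulExt_eq_mapDomain, listProd_map_linearCombination, mulExt_eq_mapDomain,
    linearCombination_mapDomain, ← lmapDomain_apply K K, apply_linearCombination]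
  congr 2
  exact funext h

end Multilinear

open Finset

def shiftDown (d : ℕ) (I : Finset ℕ) : Finset ℕ := (I.filter (d ≤ ·)).image (· - d)

section Splitting

variable (d s : ℕ)

lemma filter_lt_union_image_add {J : Finset ℕ} (J' : Finset ℕ) (hJ : J ⊆ range d) :
    (J ∪ J'.image (· + d)).filter (· < d) = J := by
  ext i
  simp only [mem_filter, mem_union, mem_image]
  constructor
  · rintro ⟨h | ⟨a, _, rfl⟩, hlt⟩
    · exact h
    · omega
  · intro h
    exact ⟨Or.inl h, mem_range.mp (hJ h)⟩

lemma shiftDown_union_image_add {J : Finset ℕ} (J' : Finset ℕ) (hJ : J ⊆ range d) :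
    shiftDown d (J ∪ J'.image (· + d)) = J' := by
  ext i
  simp only [shiftDown, mem_image, mem_filter, mem_union]
  constructor
  · rintro ⟨j, ⟨h | ⟨a, ha, rfl⟩, hge⟩, rfl⟩
    · have := mem_range.mp (hJ h); omega
    · simpa using ha
  · intro h
    exact ⟨i + d, ⟨Or.inr ⟨i, h, rfl⟩, by omega⟩, by omega⟩

lemma filter_lt_union_image_add_shiftDown (I : Finset ℕ) :
    I.filter (· < d) ∪ (shiftDown d I).image (· + d) = I := by
  ext i
  simp only [shiftDown, image_image, mem_union, mem_filter, mem_image, Function.comp_apply]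
  constructor
  · rintro (⟨h, _⟩ | ⟨a, ⟨ha, hge⟩, rfl⟩)
    · exact h
    · rwa [Nat.sub_add_cancel hge]
  · intro h
    by_cases hd : i < d
    · exact Or.inl ⟨h, hd⟩
    · exact Or.inr ⟨i, ⟨h, by omega⟩, by omega⟩

lemma shiftDown_subset_range {I : Finset ℕ} (hI : I ⊆ range (d + s)) :
    shiftDown d I ⊆ range s := by
  intro i hi
  obtain ⟨j, hj, rfl⟩ := mem_image.mp hi
  have := mem_range.mp (hI (mem_filter.mp hj).1)
  have := (mem_filter.mp hj).2
  rw [mem_range]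
  omega

lemma filter_lt_sdiff (I : Finset ℕ) :
    (range (d + s) \ I).filter (· < d) = range d \ I.filter (· < d) := by
  ext i
  simp only [mem_filter, mem_sdiff, mem_range]
  constructor
  · rintro ⟨⟨-, h⟩, hd⟩
    exact ⟨hd, fun hc => h hc.1⟩
  · rintro ⟨hd, h⟩
    exact ⟨⟨by omega, fun hc => h ⟨hc, hd⟩⟩, hd⟩

lemma shiftDown_sdiff (I : Finset ℕ) :
    shiftDown d (range (d + s) \ I) = range s \ shiftDown d I := by
  ext i
  simp only [shiftDown, mem_image, mem_filter, mem_sdiff, mem_range]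
  constructor
  · rintro ⟨j, ⟨⟨hj, hnj⟩, hge⟩, rfl⟩
    refine ⟨by omega, ?_⟩
    rintro ⟨a, ⟨ha, hage⟩, he⟩
    exact hnj (by rwa [show a = j by omega] at ha)
  · rintro ⟨hi, hni⟩
    exact ⟨i + d, ⟨⟨by omega, fun hc => hni ⟨i + d, ⟨hc, by omega⟩, by omega⟩⟩, by omega⟩, by omega⟩

lemma sum_powerset_range_add {M : Type*} [AddCommMonoid M] (F : Finset ℕ → Finset ℕ → M) :
    ∑ I ∈ (range (d + s)).powerset, F (I.filter (· < d)) (shiftDown d I)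
      = ∑ J ∈ (range d).powerset, ∑ J' ∈ (range s).powerset, F J J' := by
  rw [← sum_product']
  refine sum_nbij' (fun I => (I.filter (· < d), shiftDown d I))
    (fun p => p.1 ∪ p.2.image (· + d)) ?_ ?_ ?_ ?_ (fun _ _ => rfl)
  · intro I hI
    rw [mem_powerset] at hI
    simp only [mem_product, mem_powerset]
    refine ⟨fun i hi => ?_, shiftDown_subset_range d s hI⟩
    simp [(mem_filter.mp hi).2]
  · intro p hp
    simp only [mem_product, mem_powerset] at hp ⊢
    refine union_subset (hp.1.trans (range_subset_range.mpr (by omega))) fun i hi => ?_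
    obtain ⟨a, ha, rfl⟩ := mem_image.mp hi
    have := mem_range.mp (hp.2 ha)
    rw [mem_range]
    omega
  · intro I _
    exact filter_lt_union_image_add_shiftDown d I
  · intro p hp
    simp only [mem_product, mem_powerset] at hp
    ext1
    · exact filter_lt_union_image_add d _ hp.1
    · exact shiftDown_union_image_add d _ hp.1

end Splitting

namespace PTree

lemma deg_node (l : List PTree) : (node l).deg = max 1 (l.map deg).sum := by
  rw [deg]
  congr 1
  simp

lemma one_le_deg (t : PTree) : 1 ≤ t.deg := by
  cases t with
  | node l => rw [deg_node]; omega

lemma deg_node_of_ne_nil {l : List PTree} (h : l ≠ []) : (node l).deg = (l.map deg).sum := by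
  obtain ⟨t, ts, rfl⟩ := List.exists_cons_of_ne_nil h
  have := one_le_deg t
  rw [deg_node, List.map_cons, List.sum_cons]
  omega

lemma deg_x : x.deg = 1 := by
  simp [x, deg_node]

lemma red_node_singleton (t : PTree) : (node [t]).red = t.red := by
  rw [red]

lemma red_node_of_length_ne_one {l : List PTree} (h : l.length ≠ 1) :
    (node l).red = node (l.map red) := by
  rw [red.eq_def]
  match l, h with
  | [], _ => simp
  | t :: t' :: ts, _ => simp

lemma sub_node (l : List PTree) (I : Finset ℕ) : (node l).sub I = node (subList l I) := by
  rw [sub]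

lemma subList_nil (I : Finset ℕ) : subList [] I = [] := by
  rw [subList]

lemma subList_cons (t : PTree) (ts : List PTree) (I : Finset ℕ) :
    subList (t :: ts) I =
      (if (I.filter (· < t.deg)).Nonempty then [t.sub (I.filter (· < t.deg))] else [])
        ++ subList ts (shiftDown t.deg I) := by
  rw [subList, shiftDown]

lemma subList_empty (l : List PTree) : subList l ∅ = [] := by
  induction l with
  | nil => exact subList_nil ∅
  | cons t ts ih => simp [subList_cons, shiftDown, ih]

lemma subList_ne_nil {l : List PTree} {I : Finset ℕ} (hne : I.Nonempty)
    (hI : I ⊆ Finset.range (l.map deg).sum) : subList l I ≠ [] := by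
  induction l generalizing I with
  | nil => simp_all
  | cons t ts ih =>
    rw [subList_cons]
    by_cases h : (I.filter (· < t.deg)).Nonempty
    · simp [h]
    · rw [if_neg h, List.nil_append]
      have hle : ∀ i ∈ I, t.deg ≤ i := fun i hi => by
        by_contra hc
        exact h ⟨i, Finset.mem_filter.mpr ⟨hi, by omega⟩⟩
      refine ih ?_ (shiftDown_subset_range _ _ (by simpa using hI))
      obtain ⟨i, hi⟩ := hne
      exact ⟨i - t.deg, Finset.mem_image.mpr ⟨i, Finset.mem_filter.mpr ⟨hi, hle i hi⟩, rfl⟩⟩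

lemma contract_empty (t : PTree) : t.contract ∅ = none := by
  rw [contract, if_pos rfl]

lemma contract_x : x.contract {0} = some x := by
  rw [contract, if_neg (Finset.singleton_ne_empty 0), x, sub_node, subList_nil,
    red_node_of_length_ne_one (by simp), List.map_nil]

end PTree

open PTree

@[simp] lemma degO_none : degO none = 0 := rfl

@[simp] lemma degO_some (t : PTree) : degO (some t) = t.deg := rfl

lemma sum_map_degO (ts : List OT) : (ts.map degO).sum = (ts.reduceOption.map deg).sum := by
  induction ts with
  | nil => rfl
  | cons t ts ih => cases t <;> simp [ih]

lemma degO_grO (ts : List OT) : degO (grO ts) = (ts.map degO).sum := by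
  rw [sum_map_degO, grO]
  match ts.reduceOption with
  | [] => rfl
  | [t] => simp
  | t :: t' :: l => rw [degO_some, deg_node_of_ne_nil (List.cons_ne_nil _ _)]

/-- `(T₁|I₁, …, Tₘ|Iₘ)`, where `Iₖ` is the part of `I` lying in the leaves of `Tₖ`
when the leaves of `T₁, …, Tₘ` are numbered consecutively. -/
def contractList : List OT → Finset ℕ → List OT
  | [], _ => []
  | t :: ts, I => contractO t (I.filter (· < degO t)) :: contractList ts (shiftDown (degO t) I)

lemma reduceOption_contractList (ts : List OT) (I : Finset ℕ) :
    (contractList ts I).reduceOption = (subList ts.reduceOption I).map red := by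
  induction ts generalizing I with
  | nil => simp [contractList, subList_nil]
  | cons t ts ih =>
    cases t with
    | none =>
      have hI : shiftDown 0 I = I := by simp [shiftDown]
      simp only [contractList, contractO, degO_none, hI, List.reduceOption_cons_of_none, ih]
    | some t =>
      show (t.contract (I.filter (· < t.deg)) :: contractList ts (shiftDown t.deg I)).reduceOption
        = (subList (t :: ts.reduceOption) I).map red
      rw [subList_cons, contract]
      by_cases h : (I.filter (· < t.deg)).Nonempty
      · rw [if_neg h.ne_empty, if_pos h, List.reduceOption_cons_of_some, ih]
        rfl
      · rw [if_pos (Finset.not_nonempty_iff_eq_empty.mp h), if_neg h,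
          List.reduceOption_cons_of_none, ih]
        rfl

lemma contractO_grO (ts : List OT) {I : Finset ℕ} (hI : I ⊆ Finset.range (ts.map degO).sum) :
    contractO (grO ts) I = grO (contractList ts I) := by
  rw [sum_map_degO] at hI
  rw [grO, grO, reduceOption_contractList]
  match ts.reduceOption, hI with
  | [], _ => rfl
  | [t], hI =>
    have hlt : I.filter (· < t.deg) = I := Finset.filter_true_of_mem fun i hi => by
      simpa using hI hi
    show t.contract I = _
    rw [contract, subList_cons, subList_nil, hlt]
    by_cases h : I = ∅
    · simp [h]
    · simp [h, Finset.nonempty_iff_ne_empty.mpr h]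
  | t :: t' :: l, hI =>
    show (node (t :: t' :: l)).contract I = _
    rw [contract]
    by_cases h : I = ∅
    · simp [h, subList_empty]
    · rw [if_neg h, sub_node]
      match subList (t :: t' :: l) I, subList_ne_nil (Finset.nonempty_iff_ne_empty.mpr h) hI with
      | [u], _ => rw [red_node_singleton]; rfl
      | u :: u' :: rest, _ => rw [red_node_of_length_ne_one (by simp)]; rfl

/-- `((T₁|I₁, T₁|I₁ᶜ), …, (Tₘ|Iₘ, Tₘ|Iₘᶜ))`, with `Iₖ` as in `contractList`. -/
def pairList : List OT → Finset ℕ → List (OT × OT)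
  | [], _ => []
  | t :: ts, I =>
      (contractO t (I.filter (· < degO t)),
        contractO t (Finset.range (degO t) \ I.filter (· < degO t))) ::
        pairList ts (shiftDown (degO t) I)

lemma map_fst_pairList (ts : List OT) (I : Finset ℕ) :
    (pairList ts I).map Prod.fst = contractList ts I := by
  induction ts generalizing I with
  | nil => rfl
  | cons t ts ih => rw [pairList, contractList, List.map_cons, ih]

lemma map_snd_pairList (ts : List OT) {I : Finset ℕ} (hI : I ⊆ Finset.range (ts.map degO).sum) :
    (pairList ts I).map Prod.snd = contractList ts (Finset.range (ts.map degO).sum \ I) := by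
  induction ts generalizing I with
  | nil => rfl
  | cons t ts ih =>
    rw [List.map_cons, List.sum_cons] at hI ⊢
    rw [pairList, contractList, List.map_cons, filter_lt_sdiff, shiftDown_sdiff,
      ih (shiftDown_subset_range _ _ hI)]

section Coaddition

variable (K : Type) [Field K]

open Finsupp

lemma listProd_map_DeltaM (ts : List OT) :
    listProd K (ts.map (DeltaM K)) =
      ∑ I ∈ (range (ts.map degO).sum).powerset, single (pairList ts I) (1 : K) := by
  induction ts with
  | nil => simp [listProd, pairList]
  | cons t ts ih =>
    rw [List.map_cons, listProd_cons, ih, DeltaM, List.map_cons, List.sum_cons]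
    simp only [map_sum, LinearMap.sum_apply, consProd_single_single, mul_one]
    rw [Finset.sum_comm, ← sum_powerset_range_add]
    exact sum_congr rfl fun I _ => by rw [pairList]

lemma mulExt_grPair_map_DeltaM (ts : List OT) :
    mulExt K grPair (ts.map (DeltaM K)) = DeltaM K (grO ts) := by
  rw [mulExt_eq_mapDomain, listProd_map_DeltaM, mapDomain_finsetSum, DeltaM, degO_grO]
  refine sum_congr rfl fun I hI => ?_
  rw [mem_powerset] at hI
  rw [mapDomain_single, grPair, map_fst_pairList, map_snd_pairList ts hI,
    contractO_grO ts hI, contractO_grO ts sdiff_subset]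

lemma Delta_eq_linearCombination : Delta K = linearCombination K (DeltaM K) := by
  ext1 f
  rw [Delta, linearCombination_apply]

lemma Delta_grF (fs : List (AMod K)) : Delta K (grF K fs) = grB K (fs.map (Delta K)) := by
  rw [Delta_eq_linearCombination, grF, grB,
    mulExt_map_linearCombination grO grPair _ _ (mulExt_grPair_map_DeltaM K)]

lemma Delta_single_one (T : OT) : Delta K (single T 1) = DeltaM K T := by
  rw [Delta_eq_linearCombination, linearCombination_single, one_smul]

lemma DeltaM_apply (T V W : OT) : DeltaM K T (V, W) = Ncount V W T := by
  classical
  rw [DeltaM, Finset.sum_apply']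
  simp only [single_apply, Prod.mk.injEq]
  rw [sum_boole, Ncount, NFinset]

lemma Delta_apply {f : AMod K} (hf : suppRed K f) (V W : OT) :
    Delta K f (V, W) = ∑ᶠ (T : OT) (_ : ROT T), f T * (Ncount V W T : K) := by
  rw [finsum_cond_eq_sum_of_cond_iff _ fun {T} h =>
    ⟨fun _ => mem_support_iff.mpr fun h0 => h (by rw [h0, zero_mul]), hf T⟩]
  rw [Delta, Finsupp.sum, Finset.sum_apply']
  simp only [Finsupp.smul_apply, DeltaM_apply, smul_eq_mul]

lemma Delta_one : Delta K (single none 1) = single (none, none) 1 := by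
  rw [Delta_single_one, DeltaM, degO_none, range_zero, powerset_empty, sum_singleton]
  rfl

lemma Delta_x :
    Delta K (single (some x) 1) = single (some x, none) 1 + single (none, some x) 1 := by
  rw [Delta_single_one, DeltaM, degO_some, deg_x, range_one,
    show ({0} : Finset ℕ).powerset = {∅, {0}} by decide, sum_insert (by decide), sum_singleton,
    sdiff_self, sdiff_empty]
  simp only [contractO, bot_eq_empty, contract_empty, contract_x]
  rw [add_comm]

end Coaddition

/-- For the co-addition `Δ` on the free `K`-module on `PRT'`:
(i) `Δ(1) = (1,1)` and `Δ(x) = (x,1) + (1,x)`;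
(ii) `Δ(gr(f_1,…,f_m)) = gr(Δ(f_1),…,Δ(f_m))` for `m ≥ 2`;
(iii) `c_{V,W}(Δ(f)) = Σ_{T ∈ PRT'} c_T(f)·#N_{V,W}(T)`. -/
theorem delta_properties (K : Type) [Field K] :
    Delta K (Finsupp.single (none : OT) 1)
        = Finsupp.single ((none : OT), (none : OT)) 1 ∧
      Delta K (Finsupp.single (some PTree.x) 1)
        = Finsupp.single ((some PTree.x : OT), (none : OT)) 1
            + Finsupp.single ((none : OT), (some PTree.x : OT)) 1 ∧
      (∀ fs : List (AMod K), 2 ≤ fs.length → (∀ f ∈ fs, suppRed K f) →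
        Delta K (grF K fs) = grB K (fs.map (Delta K))) ∧
      (∀ f : AMod K, suppRed K f → ∀ V W : OT, ROT V → ROT W →
        Delta K f (V, W) = ∑ᶠ (T : OT) (_ : ROT T), f T * (Ncount V W T : K)) :=
  ⟨Delta_one K, Delta_x K, fun fs _ _ => Delta_grF K fs, fun _ hf V W _ _ => Delta_apply K hf V W⟩
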